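/- Let V_λ^w be the irreducible graded representation of sl₂ with highest weight λ and sign w. Then its dual graded representation satisfies (V_λ^w)* ≅ V_λ^{w·(−1)^λ}. -/
import Mathlib


open LinearMap Module

namespace Sl2GradedModel

variable (K : Type*) [Field K] (n : ℕ)

/-- `h` acting on the irreducible `sl₂`-representation of highest weight `n`:
`h mᵢ = (n − 2i) mᵢ`. -/
noncomputable def Hmap : (Fin (n + 1) → K) →ₗ[K] (Fin (n + 1) → K) :=
  LinearMap.pi fun i => ((n : K) - 2 * (i : ℕ)) • LinearMap.proj i

/-- `e` acting on the model: `e mᵢ = i (n − i + 1) m_{i−1}`, `e m₀ = 0`. -/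
noncomputable def Emap : (Fin (n + 1) → K) →ₗ[K] (Fin (n + 1) → K) :=
  LinearMap.pi fun i =>
    if h : (i : ℕ) + 1 < n + 1 then
      ((((i : ℕ) : K) + 1) * ((n : K) - ((i : ℕ) : K))) • LinearMap.proj (⟨(i : ℕ) + 1, h⟩ : Fin (n + 1))
    else 0

/-- `f` acting on the model: `f mᵢ = m_{i+1}`, `f m_n = 0`. -/
noncomputable def Fmap : (Fin (n + 1) → K) →ₗ[K] (Fin (n + 1) → K) :=
  LinearMap.pi fun i =>
    if h : 0 < (i : ℕ) then
      LinearMap.proj (⟨(i : ℕ) - 1, by omega⟩ : Fin (n + 1))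
    else 0

/-- The graded piece of parity `q` of `V_n^w`, where `mᵢ` has parity `p + i (mod 2)`. -/
def grade (p q : ℕ) : Submodule K (Fin (n + 1) → K) where
  carrier := {v | ∀ i : Fin (n + 1), (p + (i : ℕ)) % 2 ≠ q % 2 → v i = 0}
  add_mem' := by intro a b ha hb i hi; simp [ha i hi, hb i hi]
  zero_mem' := by intro i _; rfl
  smul_mem' := by intro c a ha i hi; simp [ha i hi]

end Sl2GradedModel

open Sl2GradedModel

section Aux

variable (K : Type*) [Field K] (n : ℕ)

lemma Emap_apply (v : Fin (n + 1) → K) (j : Fin (n + 1)) :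
    Emap K n v j = if h : (j : ℕ) + 1 < n + 1 then
      ((((j : ℕ) : K) + 1) * ((n : K) - ((j : ℕ) : K))) * v ⟨(j : ℕ) + 1, h⟩ else 0 := by
  rw [Emap, LinearMap.pi_apply]
  split <;> simp

lemma Hmap_apply (v : Fin (n + 1) → K) (j : Fin (n + 1)) :
    Hmap K n v j = ((n : K) - 2 * ((j : ℕ) : K)) * v j := by
  rw [Hmap, LinearMap.pi_apply]; simp

lemma Fmap_apply (v : Fin (n + 1) → K) (j : Fin (n + 1)) :
    Fmap K n v j = if h : 0 < (j : ℕ) then v ⟨(j : ℕ) - 1, by omega⟩ else 0 := by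
  rw [Fmap, LinearMap.pi_apply]
  split <;> simp

lemma Emap_single_pos (k : Fin (n + 1)) (hk : 0 < (k : ℕ)) :
    Emap K n (Pi.single k 1 : Fin (n + 1) → K) =
      ((((k : ℕ) : K)) * ((n : K) - ((k : ℕ) : K) + 1)) •
        (Pi.single (⟨(k : ℕ) - 1, by omega⟩ : Fin (n + 1)) 1 : Fin (n + 1) → K) := by
  funext i
  rw [Emap_apply]
  simp only [Pi.smul_apply, Pi.single_apply, smul_eq_mul, Fin.ext_iff]
  split
  · next h =>
    by_cases hik : (i : ℕ) + 1 = (k : ℕ)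
    · have h1 : ((⟨(i : ℕ) + 1, h⟩ : Fin (n + 1)) : ℕ) = (k : ℕ) := hik
      have h2 : (i : ℕ) = (k : ℕ) - 1 := by omega
      rw [if_pos h1, if_pos h2, ← hik]
      push_cast
      ring
    · have h1 : ((⟨(i : ℕ) + 1, h⟩ : Fin (n + 1)) : ℕ) ≠ (k : ℕ) := hik
      have h2 : (i : ℕ) ≠ (k : ℕ) - 1 := by omega
      rw [if_neg h1, if_neg h2]
      ring
  · next h =>
    have h2 : (i : ℕ) ≠ (k : ℕ) - 1 := by
      have := i.isLt; have := k.isLt; omega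
    rw [if_neg h2]
    ring

lemma Emap_single_zero (k : Fin (n + 1)) (hk : (k : ℕ) = 0) :
    Emap K n (Pi.single k 1 : Fin (n + 1) → K) = 0 := by
  funext i
  rw [Emap_apply]
  simp only [Pi.single_apply, Fin.ext_iff, Pi.zero_apply]
  split
  · next h =>
    have : ((⟨(i : ℕ) + 1, h⟩ : Fin (n + 1)) : ℕ) ≠ (k : ℕ) := by
      show (i : ℕ) + 1 ≠ (k : ℕ); omega
    rw [if_neg this]; ring
  · rfl

lemma Hmap_single (k : Fin (n + 1)) :
    Hmap K n (Pi.single k 1 : Fin (n + 1) → K) = ((n : K) - 2 * ((k : ℕ) : K)) • (Pi.single k 1 : Fin (n + 1) → K) := by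
  funext i
  rw [Hmap_apply]
  simp only [Pi.smul_apply, Pi.single_apply, smul_eq_mul, Fin.ext_iff]
  by_cases h : (i : ℕ) = (k : ℕ)
  · simp only [if_pos h, h]
  · simp only [if_neg h]; ring

lemma Fmap_single_lt (k : Fin (n + 1)) (hk : (k : ℕ) < n) :
    Fmap K n (Pi.single k 1 : Fin (n + 1) → K) =
      (Pi.single (⟨(k : ℕ) + 1, by omega⟩ : Fin (n + 1)) 1 : Fin (n + 1) → K) := by
  funext i
  rw [Fmap_apply]
  simp only [Pi.single_apply, Fin.ext_iff]
  split
  · next h =>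
    by_cases hik : (i : ℕ) - 1 = (k : ℕ)
    · have h1 : ((⟨(i : ℕ) - 1, by omega⟩ : Fin (n + 1)) : ℕ) = (k : ℕ) := hik
      have h2 : (i : ℕ) = (k : ℕ) + 1 := by omega
      rw [if_pos h1, if_pos h2]
    · have h1 : ((⟨(i : ℕ) - 1, by omega⟩ : Fin (n + 1)) : ℕ) ≠ (k : ℕ) := hik
      have h2 : (i : ℕ) ≠ (k : ℕ) + 1 := by omega
      rw [if_neg h1, if_neg h2]
  · next h =>
    have h2 : (i : ℕ) ≠ (k : ℕ) + 1 := by omega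
    rw [if_neg h2]

lemma Fmap_single_last (k : Fin (n + 1)) (hk : (k : ℕ) = n) :
    Fmap K n (Pi.single k 1 : Fin (n + 1) → K) = 0 := by
  funext i
  rw [Fmap_apply]
  simp only [Pi.single_apply, Fin.ext_iff, Pi.zero_apply]
  split
  · next h =>
    have : ((⟨(i : ℕ) - 1, by omega⟩ : Fin (n + 1)) : ℕ) ≠ (k : ℕ) := by
      show (i : ℕ) - 1 ≠ (k : ℕ); have := i.isLt; omega
    rw [if_neg this]
  · rfl

/-- Forward map of the duality: `(Φ ψ) j = (-1)^(n-j) ψ(δ_{n-j})`. -/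
noncomputable def PhiFwd : Module.Dual K (Fin (n + 1) → K) →ₗ[K] (Fin (n + 1) → K) where
  toFun ψ := fun j => (-1 : K) ^ ((j.rev : ℕ)) * ψ (Pi.single j.rev 1)
  map_add' ψ φ := by funext j; simp [mul_add]
  map_smul' c ψ := by funext j; simp [Pi.smul_apply, smul_eq_mul]; ring

lemma PhiFwd_apply (ψ : Module.Dual K (Fin (n + 1) → K)) (j : Fin (n + 1)) :
    PhiFwd K n ψ j = (-1 : K) ^ ((j.rev : ℕ)) * ψ (Pi.single j.rev 1) := rfl

/-- Backward map of the duality. -/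
noncomputable def PhiBwd : (Fin (n + 1) → K) →ₗ[K] Module.Dual K (Fin (n + 1) → K) :=
  ∑ i : Fin (n + 1), ((-1 : K) ^ ((i : ℕ))) •
    LinearMap.smulRight (LinearMap.proj i.rev : (Fin (n + 1) → K) →ₗ[K] K)
      (LinearMap.proj i : (Fin (n + 1) → K) →ₗ[K] K)

lemma PhiBwd_apply (v : Fin (n + 1) → K) (w : Fin (n + 1) → K) :
    PhiBwd K n v w = ∑ i : Fin (n + 1), (-1 : K) ^ ((i : ℕ)) * (v i.rev * w i) := by
  simp [PhiBwd, mul_comm]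

lemma neg_one_sq_pow (m : ℕ) : ((-1 : K) ^ m) * ((-1 : K) ^ m) = 1 := by
  rw [← pow_add]
  exact Even.neg_one_pow ⟨m, rfl⟩

lemma dual_eval (ψ : Module.Dual K (Fin (n + 1) → K)) (w : Fin (n + 1) → K) :
    ψ w = ∑ i : Fin (n + 1), w i * ψ (Pi.single i 1) := by
  conv_lhs => rw [LinearMap.pi_apply_eq_sum_univ ψ w]
  refine Finset.sum_congr rfl fun i _ => ?_
  rw [smul_eq_mul]
  have : (fun j => if i = j then (1 : K) else 0) = (Pi.single i 1 : Fin (n + 1) → K) := by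
    funext j
    simp [Pi.single_apply, eq_comm]
  rw [this]

end Aux


/-- `(V_λ^w)* ≅ V_λ^{w(−1)^λ}` : the dual of the irreducible graded `sl₂`-representation
with highest weight `λ = n` and highest weight parity `p` is the irreducible graded
representation with the same highest weight and parity `p + λ`.  The dual action is
`(x·ψ)(v) = −ψ(x·v)`, the dual grading is `(V*)_q = (V_q)* = {ψ | ψ(V_{1−q}) = 0}`,
and the isomorphism intertwines the actions and the gradings. -/
theorem dual_irreducible_graded {K : Type*} [Field K] [CharZero K] (n p : ℕ) :
    ∃ Φ : Module.Dual K (Fin (n + 1) → K) ≃ₗ[K] (Fin (n + 1) → K),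
      (∀ ψ, Φ (-(Emap K n).dualMap ψ) = Emap K n (Φ ψ)) ∧
      (∀ ψ, Φ (-(Hmap K n).dualMap ψ) = Hmap K n (Φ ψ)) ∧
      (∀ ψ, Φ (-(Fmap K n).dualMap ψ) = Fmap K n (Φ ψ)) ∧
      (∀ ψ, (∀ v ∈ grade K n p 1, ψ v = 0) ↔ Φ ψ ∈ grade K n (p + n) 0) ∧
      (∀ ψ, (∀ v ∈ grade K n p 0, ψ v = 0) ↔ Φ ψ ∈ grade K n (p + n) 1) := by
  have hrev : ∀ j : Fin (n + 1), ((j.rev : ℕ)) = n - (j : ℕ) := by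
    intro j; rw [Fin.val_rev]; omega
  refine ⟨LinearEquiv.ofLinear (PhiFwd K n) (PhiBwd K n) ?_ ?_, ?_, ?_, ?_, ?_, ?_⟩
  · -- PhiFwd ∘ PhiBwd = id
    apply LinearMap.ext; intro v
    funext j
    rw [LinearMap.comp_apply, LinearMap.id_apply, PhiFwd_apply, PhiBwd_apply]
    rw [Finset.sum_eq_single j.rev]
    · rw [Pi.single_apply, if_pos rfl, Fin.rev_rev, mul_one, ← mul_assoc,
        neg_one_sq_pow, one_mul]
    · intro i _ hij
      rw [Pi.single_apply, if_neg hij, mul_zero, mul_zero]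
    · intro h; exact absurd (Finset.mem_univ _) h
  · -- PhiBwd ∘ PhiFwd = id
    apply LinearMap.ext; intro ψ
    apply LinearMap.ext; intro w
    rw [LinearMap.comp_apply, LinearMap.id_apply, PhiBwd_apply, dual_eval K n ψ w]
    refine Finset.sum_congr rfl fun i _ => ?_
    rw [PhiFwd_apply, Fin.rev_rev, ← mul_assoc, ← mul_assoc, neg_one_sq_pow, one_mul,
      mul_comm (ψ _)]
  · -- E intertwines
    intro ψ
    simp only [LinearEquiv.ofLinear_apply]
    funext j
    rw [PhiFwd_apply, Emap_apply]
    by_cases hj : (j : ℕ) + 1 < n + 1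
    · rw [dif_pos hj]
      have hk : 0 < (j.rev : ℕ) := by rw [hrev]; omega
      rw [LinearMap.neg_apply, LinearMap.dualMap_apply, Emap_single_pos K n j.rev hk,
        map_smul]
      have harg : (⟨(j.rev : ℕ) - 1, by omega⟩ : Fin (n + 1)) =
          (⟨(j : ℕ) + 1, hj⟩ : Fin (n + 1)).rev := by
        apply Fin.ext
        simp only [Fin.val_rev]
        omega
      rw [harg, PhiFwd_apply]
      have hval : ((⟨(j : ℕ) + 1, hj⟩ : Fin (n + 1)).rev : ℕ) = n - (j : ℕ) - 1 := by
        simp only [Fin.val_rev]; omega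
      rw [hval]
      have hcast : ((j.rev : ℕ) : K) = (n : K) - ((j : ℕ) : K) := by
        rw [hrev, Nat.cast_sub (by omega)]
      have hpow : (-1 : K) ^ ((j.rev : ℕ)) = -(-1 : K) ^ (n - (j : ℕ) - 1) := by
        rw [hrev]
        conv_lhs => rw [show n - (j : ℕ) = (n - (j : ℕ) - 1) + 1 from by omega]
        rw [pow_succ, mul_neg_one]
      rw [hcast, hpow, smul_eq_mul]
      ring
    · rw [dif_neg hj]
      have hk : (j.rev : ℕ) = 0 := by rw [hrev]; omega
      rw [LinearMap.neg_apply, LinearMap.dualMap_apply, Emap_single_zero K n j.rev hk,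
        map_zero, neg_zero, mul_zero]
  · -- H intertwines
    intro ψ
    simp only [LinearEquiv.ofLinear_apply]
    funext j
    rw [PhiFwd_apply, Hmap_apply, LinearMap.neg_apply,
      LinearMap.dualMap_apply, Hmap_single, map_smul, PhiFwd_apply, smul_eq_mul]
    have hcast : ((j.rev : ℕ) : K) = (n : K) - ((j : ℕ) : K) := by
      rw [hrev, Nat.cast_sub (by omega)]
    rw [hcast]
    ring
  · -- F intertwines
    intro ψ
    simp only [LinearEquiv.ofLinear_apply]
    funext j
    rw [PhiFwd_apply, Fmap_apply]
    by_cases hj : 0 < (j : ℕ)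
    · rw [dif_pos hj]
      have hk : (j.rev : ℕ) < n := by rw [hrev]; omega
      rw [LinearMap.neg_apply, LinearMap.dualMap_apply, Fmap_single_lt K n j.rev hk]
      have harg : (⟨(j.rev : ℕ) + 1, by omega⟩ : Fin (n + 1)) =
          (⟨(j : ℕ) - 1, by omega⟩ : Fin (n + 1)).rev := by
        apply Fin.ext
        simp only [Fin.val_rev]
        omega
      rw [harg, PhiFwd_apply]
      have hval : ((⟨(j : ℕ) - 1, by omega⟩ : Fin (n + 1)).rev : ℕ) = n - (j : ℕ) + 1 := by
        simp only [Fin.val_rev]; omega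
      rw [hval]
      have hpow : (-1 : K) ^ (n - (j : ℕ) + 1) = -(-1 : K) ^ ((j.rev : ℕ)) := by
        rw [hrev, pow_succ]
        ring
      rw [hpow]
      ring
    · rw [dif_neg hj]
      have hk : (j.rev : ℕ) = n := by rw [hrev]; omega
      rw [LinearMap.neg_apply, LinearMap.dualMap_apply, Fmap_single_last K n j.rev hk,
        map_zero, neg_zero, mul_zero]
  · -- grading 1 ↔ 0
    intro ψ
    simp only [LinearEquiv.ofLinear_apply]
    constructor
    · intro hψ j hjpar
      rw [PhiFwd_apply]
      have : ψ (Pi.single j.rev 1) = 0 := by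
        apply hψ
        intro i hi
        rw [Pi.single_apply]
        by_cases h : i = j.rev
        · exfalso
          apply hi
          rw [h, hrev]
          have := j.isLt
          omega
        · rw [if_neg h]
      rw [this, mul_zero]
    · intro hΦ v hv
      rw [dual_eval K n ψ v]
      refine Finset.sum_eq_zero fun i _ => ?_
      by_cases hpar : (p + (i : ℕ)) % 2 = 1 % 2
      · have h0 : PhiFwd K n ψ i.rev = 0 := by
          apply hΦ
          rw [hrev]
          have := i.isLt
          omega
        rw [PhiFwd_apply, Fin.rev_rev] at h0
        have : ψ (Pi.single i 1) = 0 := by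
          have hne : (-1 : K) ^ ((i : ℕ)) ≠ 0 := by
            apply pow_ne_zero; norm_num
          exact (mul_eq_zero.mp h0).resolve_left hne
        rw [this, mul_zero]
      · rw [hv i hpar, zero_mul]
  · -- grading 0 ↔ 1
    intro ψ
    simp only [LinearEquiv.ofLinear_apply]
    constructor
    · intro hψ j hjpar
      rw [PhiFwd_apply]
      have : ψ (Pi.single j.rev 1) = 0 := by
        apply hψ
        intro i hi
        rw [Pi.single_apply]
        by_cases h : i = j.rev
        · exfalso
          apply hi
          rw [h, hrev]
          have := j.isLt
          omega
        · rw [if_neg h]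
      rw [this, mul_zero]
    · intro hΦ v hv
      rw [dual_eval K n ψ v]
      refine Finset.sum_eq_zero fun i _ => ?_
      by_cases hpar : (p + (i : ℕ)) % 2 = 0 % 2
      · have h0 : PhiFwd K n ψ i.rev = 0 := by
          apply hΦ
          rw [hrev]
          have := i.isLt
          omega
        rw [PhiFwd_apply, Fin.rev_rev] at h0
        have : ψ (Pi.single i 1) = 0 := by
          have hne : (-1 : K) ^ ((i : ℕ)) ≠ 0 := by
            apply pow_ne_zero; norm_num
          exact (mul_eq_zero.mp h0).resolve_left hne
        rw [this, mul_zero]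
      · rw [hv i hpar, zero_mul]
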